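/- (Realizability of spherical triangles) Let α, β, γ ∈ (0,π) be such that 1 - cos²α - cos²β - cos²γ - 2·cosα·cosβ·cosγ > 0. Then there exists a spherical triangle (x,y,z) whose angles at the vertices x, y, z are α, β, γ respectively. -/

import Mathlib

/-- ℝ³ with the Euclidean inner product. -/
noncomputable abbrev E3 := EuclideanSpace ℝ (Fin 3)

/-- The unit tangent vector at `x` in the direction of `y`:
`x_y = (y - ⟨x,y⟩x)/‖y - ⟨x,y⟩x‖`. -/
noncomputable def sideUnit (x y : E3) : E3 :=
  ‖y - (inner ℝ x y : ℝ) • x‖⁻¹ • (y - (inner ℝ x y : ℝ) • x)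

/-- The angle of the spherical triangle `(x,y,z)` at the vertex `x`. -/
noncomputable def vertexAngle (x y z : E3) : ℝ :=
  Real.arccos (inner ℝ (sideUnit x y) (sideUnit x z) : ℝ)

/-!
By the polar law of cosines, the side `a` opposite the angle `α` must have
`cos a = (cos α + cos β cos γ) / (sin β sin γ)` and `sin a = √D / (sin β sin γ)`, where
`D = 1 - cos² α - cos² β - cos² γ - 2 cos α cos β cos γ`, and similarly for `b` and `c`.
Put `x = e₁`, `y` in the `e₁e₂`-plane at distance `c` from `x`, and `z` at distance `b` from `x`
so that the two planes through `x` meet at angle `α`. The polynomial identity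
`cos a - cos b cos c = sin b sin c cos α` (with its rotations) then shows both that
`⟪y, z⟫ = cos a` and that the angles at all three vertices are the prescribed ones.
-/

open Real RealInnerProductSpace

section Projection

variable {F : Type*} [NormedAddCommGroup F] [InnerProductSpace ℝ F] {x : F}

lemma inner_sub_inner_smul_sub_inner_smul (hx : ‖x‖ = 1) (y z : F) :
    ⟪y - ⟪x, y⟫ • x, z - ⟪x, z⟫ • x⟫ = ⟪y, z⟫ - ⟪x, y⟫ * ⟪x, z⟫ := by
  simp only [inner_sub_left, inner_sub_right, real_inner_smul_left, real_inner_smul_right,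
    real_inner_self_eq_norm_sq, hx, real_inner_comm y x]
  ring

lemma norm_sub_inner_smul_sq (hx : ‖x‖ = 1) {y : F} (hy : ‖y‖ = 1) :
    ‖y - ⟪x, y⟫ • x‖ ^ 2 = 1 - ⟪x, y⟫ ^ 2 := by
  rw [← real_inner_self_eq_norm_sq, inner_sub_inner_smul_sub_inner_smul hx,
    real_inner_self_eq_norm_sq, hy]
  ring

end Projection

lemma vertexAngle_eq_of_inner {x y z : E3} (hx : ‖x‖ = 1) (hy : ‖y‖ = 1) (hz : ‖z‖ = 1)
    {a b c s t θ : ℝ} (hxy : ⟪x, y⟫ = c) (hxz : ⟪x, z⟫ = b) (hyz : ⟪y, z⟫ = a)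
    (hs : 0 < s) (ht : 0 < t) (hcs : c ^ 2 + s ^ 2 = 1) (hbt : b ^ 2 + t ^ 2 = 1)
    (h : a - c * b = s * t * cos θ) (hθ : θ ∈ Set.Icc 0 π) : vertexAngle x y z = θ := by
  subst hxy hxz hyz
  have hns : ‖y - ⟪x, y⟫ • x‖ = s := by
    rw [← sq_eq_sq₀ (norm_nonneg _) hs.le, norm_sub_inner_smul_sq hx hy]
    linarith
  have hnt : ‖z - ⟪x, z⟫ • x‖ = t := by
    rw [← sq_eq_sq₀ (norm_nonneg _) ht.le, norm_sub_inner_smul_sq hx hz]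
    linarith
  rw [vertexAngle, sideUnit, sideUnit, hns, hnt, real_inner_smul_left, real_inner_smul_right,
    inner_sub_inner_smul_sub_inner_smul hx, h]
  convert arccos_cos hθ.1 hθ.2 using 2
  field_simp

lemma inner_toLp_three (a b c a' b' c' : ℝ) :
    ⟪!₂[a, b, c], !₂[a', b', c']⟫ = a * a' + b * b' + c * c' := by
  simp [PiLp.inner_apply, Fin.sum_univ_three, mul_comm]

lemma norm_toLp_three_eq_one_iff (a b c : ℝ) :
    ‖!₂[a, b, c]‖ = 1 ↔ a ^ 2 + b ^ 2 + c ^ 2 = 1 := by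
  rw [← sq_eq_sq₀ (norm_nonneg _) zero_le_one, one_pow, ← real_inner_self_eq_norm_sq,
    inner_toLp_three]
  ring_nf

lemma linearIndependent_lowerTriangular_three {a b c d e f : ℝ} (ha : a ≠ 0) (hc : c ≠ 0)
    (hf : f ≠ 0) : LinearIndependent ℝ ![!₂[a, 0, 0], !₂[b, c, 0], !₂[d, e, f]] := by
  rw [Fintype.linearIndependent_iff]
  intro g hg
  simp only [Fin.sum_univ_three, Matrix.cons_val_zero, Matrix.cons_val_one, Matrix.cons_val_two,
    Matrix.head_cons, Matrix.tail_cons] at hg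
  have h0 := congrArg (·.ofLp 0) hg
  have h1 := congrArg (·.ofLp 1) hg
  have h2 := congrArg (·.ofLp 2) hg
  simp only [PiLp.add_apply, PiLp.smul_apply, Matrix.cons_val_zero,
    Matrix.cons_val_one, Matrix.cons_val_two, Matrix.head_cons, Matrix.tail_cons, smul_eq_mul,
    mul_zero, add_zero, zero_add, PiLp.zero_apply] at h0 h1 h2
  have hg2 : g 2 = 0 := (mul_eq_zero.mp h2).resolve_right hf
  have hg1 : g 1 = 0 := by simpa [hg2, hc] using h1
  have hg0 : g 0 = 0 := by simpa [hg1, hg2, ha] using h0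
  intro i
  fin_cases i <;> assumption

lemma exists_linearIndependent_unit_triple {r s q t θ : ℝ} (hrs : r ^ 2 + s ^ 2 = 1)
    (hqt : q ^ 2 + t ^ 2 = 1) (hs : s ≠ 0) (ht : t ≠ 0) (hθ : sin θ ≠ 0) :
    ∃ x y z : E3, ‖x‖ = 1 ∧ ‖y‖ = 1 ∧ ‖z‖ = 1 ∧ LinearIndependent ℝ ![x, y, z] ∧
      ⟪x, y⟫ = r ∧ ⟪x, z⟫ = q ∧ ⟪y, z⟫ = r * q + s * t * cos θ := by
  refine ⟨!₂[1, 0, 0], !₂[r, s, 0], !₂[q, t * cos θ, t * sin θ], ?_, ?_, ?_,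
    linearIndependent_lowerTriangular_three one_ne_zero hs (mul_ne_zero ht hθ), ?_, ?_, ?_⟩
  all_goals simp only [norm_toLp_three_eq_one_iff, inner_toLp_three]
  · norm_num
  · linear_combination hrs
  · linear_combination hqt + t ^ 2 * sin_sq_add_cos_sq θ
  all_goals ring

noncomputable section PolarTriangle

/-- The Gram determinant of unit vectors `u, v, w` with `⟪v, w⟫ = -cos α`, `⟪w, u⟫ = -cos β`
and `⟪u, v⟫ = -cos γ`, the vertices of the polar triangle. -/
def angleGramDet (α β γ : ℝ) : ℝ :=
  1 - cos α ^ 2 - cos β ^ 2 - cos γ ^ 2 - 2 * cos α * cos β * cos γ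

lemma angleGramDet_rotate (α β γ : ℝ) : angleGramDet β γ α = angleGramDet α β γ := by
  unfold angleGramDet; ring

/-- `polarCos α β γ` and `polarSin α β γ` are the cosine and sine of the side opposite the
vertex with angle `α`, as given by the polar law of cosines. -/
def polarCos (α β γ : ℝ) : ℝ := (cos α + cos β * cos γ) / (sin β * sin γ)

def polarSin (α β γ : ℝ) : ℝ := √(angleGramDet α β γ) / (sin β * sin γ)

variable {α β γ : ℝ}

lemma polarCos_sq_add_polarSin_sq (hβ : sin β ≠ 0) (hγ : sin γ ≠ 0)
    (hD : 0 ≤ angleGramDet α β γ) : polarCos α β γ ^ 2 + polarSin α β γ ^ 2 = 1 := by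
  rw [polarCos, polarSin, div_pow, div_pow, ← add_div, div_eq_one_iff_eq (by positivity),
    sq_sqrt hD, angleGramDet, mul_pow, sin_sq, sin_sq]
  ring

lemma polarSin_pos (hβ : 0 < sin β) (hγ : 0 < sin γ) (hD : 0 < angleGramDet α β γ) :
    0 < polarSin α β γ := by
  unfold polarSin; positivity

lemma polarCos_sub_mul (hα : sin α ≠ 0) (hβ : sin β ≠ 0) (hγ : sin γ ≠ 0)
    (hD : 0 ≤ angleGramDet α β γ) :
    polarCos α β γ - polarCos γ α β * polarCos β γ α
      = polarSin γ α β * polarSin β γ α * cos α := by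
  have hsq : √(angleGramDet α β γ) ^ 2 = angleGramDet α β γ := sq_sqrt hD
  simp only [polarCos, polarSin, angleGramDet_rotate]
  field_simp
  rw [hsq, angleGramDet]
  linear_combination (cos α + cos β * cos γ) * sin_sq α

end PolarTriangle

/-- realizability of spherical triangles. If `α, β, γ ∈ (0,π)` satisfy
`1 - cos²α - cos²β - cos²γ - 2cosα·cosβ·cosγ > 0`, then there is a spherical triangle
with angles `α, β, γ` at its vertices. -/
theorem spherical_triangle_realizable (α β γ : ℝ)
    (hα : α ∈ Set.Ioo 0 Real.pi) (hβ : β ∈ Set.Ioo 0 Real.pi)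
    (hγ : γ ∈ Set.Ioo 0 Real.pi)
    (hD : 0 < 1 - Real.cos α ^ 2 - Real.cos β ^ 2 - Real.cos γ ^ 2 -
      2 * Real.cos α * Real.cos β * Real.cos γ) :
    ∃ x y z : E3, ‖x‖ = 1 ∧ ‖y‖ = 1 ∧ ‖z‖ = 1 ∧
      LinearIndependent ℝ ![x, y, z] ∧
      vertexAngle x y z = α ∧ vertexAngle y z x = β ∧ vertexAngle z x y = γ := by
  have hsα := sin_pos_of_pos_of_lt_pi hα.1 hα.2
  have hsβ := sin_pos_of_pos_of_lt_pi hβ.1 hβ.2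
  have hsγ := sin_pos_of_pos_of_lt_pi hγ.1 hγ.2
  have hDα : 0 < angleGramDet α β γ := hD
  have hDβ : 0 < angleGramDet β γ α := by rwa [angleGramDet_rotate]
  have hDγ : 0 < angleGramDet γ α β := by rwa [angleGramDet_rotate, angleGramDet_rotate]
  have hpu := polarCos_sq_add_polarSin_sq hsβ.ne' hsγ.ne' hDα.le
  have hqt := polarCos_sq_add_polarSin_sq hsγ.ne' hsα.ne' hDβ.le
  have hrs := polarCos_sq_add_polarSin_sq hsα.ne' hsβ.ne' hDγ.le
  have hu := polarSin_pos hsβ hsγ hDα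
  have ht := polarSin_pos hsγ hsα hDβ
  have hs := polarSin_pos hsα hsβ hDγ
  obtain ⟨x, y, z, hx, hy, hz, hxyz, hxy, hxz, hyz⟩ :=
    exists_linearIndependent_unit_triple hrs hqt hs.ne' ht.ne' hsα.ne'
  replace hyz : ⟪y, z⟫ = polarCos α β γ := by
    linear_combination hyz - polarCos_sub_mul hsα.ne' hsβ.ne' hsγ.ne' hDα.le
  refine ⟨x, y, z, hx, hy, hz, hxyz, ?_, ?_, ?_⟩
  · exact vertexAngle_eq_of_inner hx hy hz hxy hxz hyz hs ht hrs hqt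
      (polarCos_sub_mul hsα.ne' hsβ.ne' hsγ.ne' hDα.le) (Set.Ioo_subset_Icc_self hα)
  · exact vertexAngle_eq_of_inner hy hz hx hyz ((real_inner_comm x y).trans hxy)
      ((real_inner_comm x z).trans hxz) hu hs hpu hrs
      (polarCos_sub_mul hsβ.ne' hsγ.ne' hsα.ne' hDβ.le) (Set.Ioo_subset_Icc_self hβ)
  · exact vertexAngle_eq_of_inner hz hx hy ((real_inner_comm x z).trans hxz)
      ((real_inner_comm y z).trans hyz) hxy ht hu hqt hpu
      (polarCos_sub_mul hsγ.ne' hsα.ne' hsβ.ne' hDγ.le) (Set.Ioo_subset_Icc_self hγ)
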